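/- Conservation of total mass in the discretized transient pipe model: summing the discretized continuity equations over all pipes and combining with the flow conservation constraints at inner nodes, the change in total linepack (Σ over pipes of (L·A/(2·R_s·T·z))·(p_l + p_r)) between two adjacent time steps equals (Δt)·(total net inflow over boundary nodes at the later time step). -/

import Mathlib

/-! Each discretized continuity equation says that the linepack of a pipe changes by `Δt` times the
difference of its end flows. Summing over pipes gives `Δt (∑ ql - ∑ qr)`, and regrouping these flow
sums by the node each pipe end is attached to turns them, via nodal flow conservation, into the total
inflow `∑ b`. -/

open Finset

lemma linepack_change_eq_of_continuity {c K Δt dp qin qout : ℝ} (hc : c ≠ 0) (hK : K ≠ 0)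
    (h : dp + 2 * K * Δt / c * (qout - qin) = 0) :
    c / (2 * K) * dp = Δt * (qin - qout) := by
  field_simp at h ⊢
  linear_combination h

lemma sum_inflow_eq_sum_flow_sub {ι V : Type*} [Fintype ι] [Fintype V] [DecidableEq V]
    (l r : ι → V) (ql qr : ι → ℝ) (b : V → ℝ)
    (hcons : ∀ v, (∑ e ∈ univ.filter (fun e => r e = v), qr e)
      - (∑ e ∈ univ.filter (fun e => l e = v), ql e) + b v = 0) :
    ∑ v, b v = ∑ e, (ql e - qr e) := by
  have hb : ∀ v, b v = (∑ e ∈ univ.filter (fun e => l e = v), ql e)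
      - ∑ e ∈ univ.filter (fun e => r e = v), qr e := fun v => by linarith [hcons v]
  simp_rw [hb, sum_sub_distrib, sum_fiberwise]

theorem stmt_12 {ι V : Type*} [Fintype ι] [Fintype V] [DecidableEq V]
    (l r : ι → V) (L A : ι → ℝ) (K Δt : ℝ)
    (hL : ∀ e, 0 < L e) (hA : ∀ e, 0 < A e) (hK : 0 < K)
    (p0 p1 : V → ℝ) (ql qr : ι → ℝ) (b : V → ℝ)
    (hcont : ∀ e, p1 (l e) + p1 (r e) - p0 (l e) - p0 (r e)
      + (2 * K * Δt / (L e * A e)) * (qr e - ql e) = 0)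
    (hcons : ∀ v, (∑ e ∈ Finset.univ.filter (fun e => r e = v), qr e)
      - (∑ e ∈ Finset.univ.filter (fun e => l e = v), ql e) + b v = 0) :
    ∑ e, (L e * A e / (2 * K)) * ((p1 (l e) + p1 (r e)) - (p0 (l e) + p0 (r e)))
      = Δt * ∑ v, b v := by
  have hpipe : ∀ e, (L e * A e / (2 * K)) * ((p1 (l e) + p1 (r e)) - (p0 (l e) + p0 (r e)))
      = Δt * (ql e - qr e) := fun e =>
    linepack_change_eq_of_continuity (mul_pos (hL e) (hA e)).ne' hK.ne'
      (by rw [sub_add_eq_sub_sub]; exact hcont e)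
  rw [sum_congr rfl fun e _ => hpipe e, ← mul_sum, sum_inflow_eq_sum_flow_sub l r ql qr b hcons]
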